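/- Let s ≥ 1 and let U be an r×d random matrix whose entries are i.i.d. Achlioptas random variables with parameter s (taking value +√s with probability 1/(2s), −√s with probability 1/(2s), and 0 with probability 1 − 1/s), with r ≥ 1 and d ≥ 1. Then for every fixed vector g ∈ ℝ^d, E[‖UᵀU g‖₂²] = (r² + r(d + s − 2))·‖g‖₂². -/

import Mathlib

/-!
Expanding the square, `E‖UᵀUg‖² = ∑ g_k g_k' E[U_ij U_ik U_i'j U_i'k']`. For independent centred
entries of unit variance and fourth moment `m₄` (here `s`), the mixed moment `E[X_a X_b X_c X_e]`
is `δ_ab δ_ce + δ_ac δ_be + δ_ae δ_bc + (m₄ - 3) δ_abce`: an index occurring exactly once kills the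
term, and two distinct pairs contribute `1`. Summed against `g_k g_k'`, the three pairings give
`r²`, `rd` and `r` times `‖g‖²`, and the diagonal correction gives `r (s - 3) ‖g‖²`.
-/

open MeasureTheory ProbabilityTheory Matrix

/-- The Achlioptas distribution with parameter `s ≥ 1`: value `+√s` with probability `1/(2s)`,
`-√s` with probability `1/(2s)` and `0` with probability `1 - 1/s`. -/
noncomputable def achMeasure (s : ℝ) : Measure ℝ :=
  ENNReal.ofReal (1 / (2 * s)) • Measure.dirac (Real.sqrt s)
    + ENNReal.ofReal (1 / (2 * s)) • Measure.dirac (-Real.sqrt s)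
    + ENNReal.ofReal (1 - 1 / s) • Measure.dirac 0

lemma integral_achMeasure {s : ℝ} (hs : 1 ≤ s) (f : ℝ → ℝ) :
    ∫ x, f x ∂achMeasure s
      = 1 / (2 * s) * f √s + 1 / (2 * s) * f (-√s) + (1 - 1 / s) * f 0 := by
  have hint (c a : ℝ) : Integrable f (ENNReal.ofReal c • Measure.dirac a) :=
    (integrable_dirac enorm_lt_top).smul_measure ENNReal.ofReal_ne_top
  rw [achMeasure, integral_add_measure ((hint _ _).add_measure (hint _ _)) (hint _ _),
    integral_add_measure (hint _ _) (hint _ _)]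
  simp only [integral_smul_measure, integral_dirac, smul_eq_mul]
  rw [ENNReal.toReal_ofReal (by positivity),
    ENNReal.toReal_ofReal (sub_nonneg.2 (div_le_one_of_le₀ hs (by positivity)))]

lemma integral_id_achMeasure {s : ℝ} (hs : 1 ≤ s) : ∫ x, x ∂achMeasure s = 0 := by
  rw [integral_achMeasure hs]; ring

lemma integral_sq_achMeasure {s : ℝ} (hs : 1 ≤ s) : ∫ x, x ^ 2 ∂achMeasure s = 1 := by
  rw [integral_achMeasure hs, neg_sq, Real.sq_sqrt (by positivity)]
  field_simp
  ring

lemma integral_pow_four_achMeasure {s : ℝ} (hs : 1 ≤ s) : ∫ x, x ^ 4 ∂achMeasure s = s := by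
  have h4 : √s ^ 4 = s ^ 2 := by rw [show 4 = 2 * 2 from rfl, pow_mul, Real.sq_sqrt (by positivity)]
  rw [integral_achMeasure hs, neg_pow, h4]
  field_simp
  ring

lemma ae_abs_le_sqrt_achMeasure (s : ℝ) : ∀ᵐ x ∂achMeasure s, |x| ≤ √s := by
  have hdirac {a : ℝ} (ha : |a| ≤ √s) : ∀ᵐ x ∂Measure.dirac a, |x| ≤ √s := by
    rwa [ae_dirac_eq]
  simp only [achMeasure, ae_add_measure_iff]
  refine ⟨⟨Measure.ae_smul_measure (hdirac ?_) _, Measure.ae_smul_measure (hdirac ?_) _⟩,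
    Measure.ae_smul_measure (hdirac ?_) _⟩ <;> simp [abs_of_nonneg (Real.sqrt_nonneg s)]

lemma ProbabilityTheory.HasLaw.memLp_top_of_achMeasure {Ω : Type*} [MeasurableSpace Ω]
    {P : Measure Ω} {s : ℝ} {Y : Ω → ℝ} (hY : HasLaw Y (achMeasure s) P) : MemLp Y ⊤ P :=
  memLp_top_of_bound hY.aemeasurable.aestronglyMeasurable √s <| by
    simpa only [Real.norm_eq_abs] using
      ae_of_ae_map hY.aemeasurable (hY.map_eq ▸ ae_abs_le_sqrt_achMeasure s)

def isserlisWeight {ι : Type*} [DecidableEq ι] (m₄ : ℝ) (a b c e : ι) : ℝ :=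
  (if a = b ∧ c = e then 1 else 0) + (if a = c ∧ b = e then 1 else 0)
    + (if a = e ∧ b = c then 1 else 0) + (if a = b ∧ b = c ∧ c = e then m₄ - 3 else 0)

namespace ProbabilityTheory.iIndepFun

variable {Ω ι : Type*} [MeasurableSpace Ω] {P : Measure Ω} {X : ι → Ω → ℝ}

lemma integral_mul_mul_mul_eq_zero (hX : iIndepFun X P) (hm : ∀ i, Measurable (X i))
    {a b c e : ι} (he : ∫ ω, X e ω ∂P = 0) (hae : a ≠ e) (hbe : b ≠ e) (hce : c ≠ e) :
    ∫ ω, X a ω * X b ω * X c ω * X e ω ∂P = 0 := by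
  classical
  have hind : IndepFun (fun ω => X a ω * X b ω * X c ω) (X e) P := by
    have := hX.indepFun_finset {a, b, c} {e} (by simp [hae.symm, hbe.symm, hce.symm]) hm
    exact this.comp
      (φ := fun v : ({a, b, c} : Finset ι) → ℝ => v ⟨a, by simp⟩ * v ⟨b, by simp⟩ * v ⟨c, by simp⟩)
      (ψ := fun v : ({e} : Finset ι) → ℝ => v ⟨e, by simp⟩) (by fun_prop) (by fun_prop)
  rw [hind.integral_fun_mul_eq_mul_integral (by fun_prop) (hm e).aestronglyMeasurable, he,
    mul_zero]

lemma integral_mul_mul_mul_eq_mul (hX : iIndepFun X P) (hm : ∀ i, Measurable (X i))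
    {a b c e : ι} (hac : a ≠ c) (hae : a ≠ e) (hbc : b ≠ c) (hbe : b ≠ e) :
    ∫ ω, X a ω * X b ω * X c ω * X e ω ∂P
      = (∫ ω, X a ω * X b ω ∂P) * ∫ ω, X c ω * X e ω ∂P := by
  simp_rw [mul_assoc (X a _ * X b _)]
  exact (hX.indepFun_mul_mul hm a b c e hac hae hbc hbe).integral_fun_mul_eq_mul_integral
    (by fun_prop) (by fun_prop)

variable [DecidableEq ι]

lemma integral_mul_eq_ite (hX : iIndepFun X P) (hm : ∀ i, Measurable (X i))
    (h1 : ∀ i, ∫ ω, X i ω ∂P = 0) (h2 : ∀ i, ∫ ω, X i ω ^ 2 ∂P = 1) (a b : ι) :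
    ∫ ω, X a ω * X b ω ∂P = if a = b then 1 else 0 := by
  split_ifs with hab
  · simpa [hab, sq] using h2 b
  · rw [(hX.indepFun hab).integral_fun_mul_eq_mul_integral (hm a).aestronglyMeasurable
      (hm b).aestronglyMeasurable, h1, zero_mul]

lemma integral_mul_mul_mul_eq_isserlisWeight (hX : iIndepFun X P) (hm : ∀ i, Measurable (X i))
    (h1 : ∀ i, ∫ ω, X i ω ∂P = 0) (h2 : ∀ i, ∫ ω, X i ω ^ 2 ∂P = 1) {m₄ : ℝ}
    (h4 : ∀ i, ∫ ω, X i ω ^ 4 ∂P = m₄) (a b c e : ι) :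
    ∫ ω, X a ω * X b ω * X c ω * X e ω ∂P = isserlisWeight m₄ a b c e := by
  unfold isserlisWeight
  have fresh {a b c e : ι} := hX.integral_mul_mul_mul_eq_zero hm (a := a) (b := b) (c := c) (h1 e)
  have pair {a b c : ι} (hac : a ≠ c) (hbc : b ≠ c) :
      ∫ ω, X a ω * X b ω * X c ω * X c ω ∂P = if a = b then 1 else 0 := by
    rw [hX.integral_mul_mul_mul_eq_mul hm hac hac hbc hbc, integral_mul_eq_ite hX hm h1 h2,
      integral_mul_eq_ite hX hm h1 h2, if_pos rfl, mul_one]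
  by_cases hce : c = e
  · subst hce
    by_cases hac : a = c
    · subst hac
      by_cases hba : b = a
      · subst hba
        simp only [show ∀ ω, X b ω * X b ω * X b ω * X b ω = X b ω ^ 4 from fun ω => by ring, h4,
          and_self, ↓reduceIte]
        ring
      · calc _ = ∫ ω, X a ω * X a ω * X a ω * X b ω ∂P := by congr 1; ext ω; ring
          _ = _ := by rw [fresh (Ne.symm hba) (Ne.symm hba) (Ne.symm hba)]; simp [hba, Ne.symm hba]
    · by_cases hbc : b = c
      · subst hbc
        calc _ = ∫ ω, X b ω * X b ω * X b ω * X a ω ∂P := by congr 1; ext ω; ring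
          _ = _ := by rw [fresh (Ne.symm hac) (Ne.symm hac) (Ne.symm hac)]; simp [hac]
      · rw [pair hac hbc]; simp [hac, hbc]
  · by_cases hbe : b = e
    · subst hbe
      by_cases hab : a = b
      · subst hab
        calc _ = ∫ ω, X a ω * X a ω * X a ω * X c ω ∂P := by congr 1; ext ω; ring
          _ = _ := by rw [fresh (Ne.symm hce) (Ne.symm hce) (Ne.symm hce)]; simp [hce, Ne.symm hce]
      · calc _ = ∫ ω, X a ω * X c ω * X b ω * X b ω ∂P := by congr 1; ext ω; ring
          _ = _ := by rw [pair hab hce]; simp [hab, hce, Ne.symm hce]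
    · by_cases hae : a = e
      · subst hae
        calc _ = ∫ ω, X b ω * X c ω * X a ω * X a ω ∂P := by congr 1; ext ω; ring
          _ = _ := by rw [pair hbe hce]; simp [hbe, hce, Ne.symm hbe]
      · rw [fresh hae hbe hce]; simp [hae, hbe, hce]

end ProbabilityTheory.iIndepFun

lemma sum_sq_transpose_mulVec_mulVec {m n R : Type*} [Fintype m] [Fintype n] [CommRing R]
    (A : Matrix m n R) (g : n → R) :
    ∑ j, (Aᵀ *ᵥ (A *ᵥ g)) j ^ 2
      = ∑ j, ∑ i, ∑ i', ∑ k, ∑ k', g k * g k' * (A i j * A i k * A i' j * A i' k') := by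
  refine Finset.sum_congr rfl fun j _ => ?_
  simp only [mulVec, dotProduct, transpose_apply]
  rw [sq, Finset.sum_mul_sum]
  refine Finset.sum_congr rfl fun i _ => Finset.sum_congr rfl fun i' _ => ?_
  rw [Finset.mul_sum, Finset.mul_sum, Finset.sum_mul_sum]
  refine Finset.sum_congr rfl fun k _ => Finset.sum_congr rfl fun k' _ => ?_
  ring

lemma sum_mul_isserlisWeight {m n : Type*} [Fintype m] [Fintype n] [DecidableEq m]
    [DecidableEq n] (m₄ : ℝ) (g : n → ℝ) :
    ∑ j, ∑ i : m, ∑ i', ∑ k, ∑ k', g k * g k' * isserlisWeight m₄ (i, j) (i, k) (i', j) (i', k')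
      = ((Fintype.card m : ℝ) ^ 2 + Fintype.card m * (Fintype.card n + m₄ - 2)) * ∑ j, g j ^ 2 := by
  simp only [isserlisWeight, Prod.mk.injEq, true_and, ite_and, and_true, and_self_left, mul_add,
    mul_ite, mul_one, mul_zero, Finset.sum_add_distrib, Finset.sum_ite_irrel, Finset.sum_ite_eq,
    Finset.mem_univ, ↓reduceIte, Finset.sum_const_zero, Finset.sum_ite_eq', Finset.sum_const,
    Finset.card_univ, nsmul_eq_mul, Finset.mul_sum]
  simp only [← Finset.sum_add_distrib]
  exact Finset.sum_congr rfl fun j _ => by ring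

theorem stmt2_general {Ωs : Type*} [MeasurableSpace Ωs] (P : Measure Ωs) [IsProbabilityMeasure P]
    (s : ℝ) (hs : 1 ≤ s)
    (r d : ℕ)
    (U : Ωs → Matrix (Fin r) (Fin d) ℝ)
    (hMeas : ∀ i j, Measurable (fun ω => U ω i j))
    (hIndep : iIndepFun
      (fun p : Fin r × Fin d => fun ω => U ω p.1 p.2) P)
    (hLaw : ∀ i j, Measure.map (fun ω => U ω i j) P = achMeasure s)
    (g : Fin d → ℝ) :
    ∫ ω, ∑ j, ((U ω)ᵀ *ᵥ (U ω *ᵥ g)) j ^ 2 ∂P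
      = ((r : ℝ) ^ 2 + (r : ℝ) * ((d : ℝ) + s - 2)) * ∑ j, g j ^ 2 := by
  set X : Fin r × Fin d → Ωs → ℝ := fun p ω => U ω p.1 p.2
  have hXm (p : Fin r × Fin d) : Measurable (X p) := hMeas p.1 p.2
  have hXlaw (p : Fin r × Fin d) : HasLaw (X p) (achMeasure s) P :=
    ⟨(hXm p).aemeasurable, hLaw p.1 p.2⟩
  have hbdd (p : Fin r × Fin d) : MemLp (X p) ⊤ P := (hXlaw p).memLp_top_of_achMeasure
  have hint (a b c e : Fin r × Fin d) :
      Integrable (fun ω => X a ω * X b ω * X c ω * X e ω) P :=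
    ((hbdd e).mul' (r := ⊤) <| (hbdd c).mul' (r := ⊤) <| (hbdd b).mul' (r := ⊤) (hbdd a)).integrable
      le_top
  have h1 p : ∫ ω, X p ω ∂P = 0 := (hXlaw p).integral_eq.trans (integral_id_achMeasure hs)
  have h2 p : ∫ ω, X p ω ^ 2 ∂P = 1 :=
    ((hXlaw p).integral_comp (by fun_prop)).trans (integral_sq_achMeasure hs)
  have h4 p : ∫ ω, X p ω ^ 4 ∂P = s :=
    ((hXlaw p).integral_comp (by fun_prop)).trans (integral_pow_four_achMeasure hs)
  calc _ = ∫ ω, ∑ j, ∑ i, ∑ i', ∑ k, ∑ k',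
        g k * g k' * (X (i, j) ω * X (i, k) ω * X (i', j) ω * X (i', k') ω) ∂P := by
        simp_rw [sum_sq_transpose_mulVec_mulVec]; rfl
    _ = ∑ j, ∑ i : Fin r, ∑ i', ∑ k, ∑ k',
          g k * g k' * isserlisWeight s (i, j) (i, k) (i', j) (i', k') := by
        simp (disch := fun_prop) only [integral_finsetSum, integral_const_mul,
          hIndep.integral_mul_mul_mul_eq_isserlisWeight hXm h1 h2 h4]
    _ = _ := by rw [sum_mul_isserlisWeight, Fintype.card_fin, Fintype.card_fin]

/-- For an `r × d` random matrix `U` with i.i.d. Achlioptas(`s`) entries, `s ≥ 1`, and any fixed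
`g ∈ ℝ^d`, `E[‖Uᵀ U g‖₂²] = (r² + r (d + s - 2)) ‖g‖₂²`. -/
theorem stmt2 {Ωs : Type*} [MeasurableSpace Ωs] (P : Measure Ωs) [IsProbabilityMeasure P]
    (s : ℝ) (hs : 1 ≤ s)
    (r d : ℕ) (hr : 1 ≤ r) (hd : 1 ≤ d)
    (U : Ωs → Matrix (Fin r) (Fin d) ℝ)
    (hMeas : ∀ i j, Measurable (fun ω => U ω i j))
    (hIndep : iIndepFun
      (fun p : Fin r × Fin d => fun ω => U ω p.1 p.2) P)
    (hLaw : ∀ i j, Measure.map (fun ω => U ω i j) P = achMeasure s)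
    (g : Fin d → ℝ) :
    ∫ ω, ∑ j, ((U ω)ᵀ *ᵥ (U ω *ᵥ g)) j ^ 2 ∂P
      = ((r : ℝ) ^ 2 + (r : ℝ) * ((d : ℝ) + s - 2)) * ∑ j, g j ^ 2 :=
  stmt2_general P s hs r d U hMeas hIndep hLaw g
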